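/- Modal contributions of a conjugate pair decompose into pairwise interaction matrices: suppose A is Hurwitz and there is a permutation σ of {1,…,n} such that for every i: λ_{σ(i)} = conj(λ_i), u_{σ(i)} = conj(u_i) (entrywise), and v_{σ(i)} = conj(v_i) (entrywise). Then for each i, ½ Vᴴ ( P̄_{z i} + P̄_{z σ(i)} ) V = ∑_{j=1}^n P_{(ij)}, where P̄_{z i} := −{ ∑_{j=1}^n ((u_iᴴ u_j)/(conj(λ_i) + λ_j)) e_i e_jᵀ }_H and P_{(ij)} := −½ { R_iᴴ R_j/(conj(λ_i) + λ_j) + R_iᵀ R_j/(λ_i + λ_j) }_H. -/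

import Mathlib

open Matrix BigOperators

/-- The residue matrix `R_i = u_i v_iᵀ`, with entries `(R_i)_{kl} = U_{ki} V_{il}`. -/
noncomputable def residue {n : ℕ} (U V : Matrix (Fin n) (Fin n) ℂ) (i : Fin n) :
    Matrix (Fin n) (Fin n) ℂ :=
  Matrix.vecMulVec (fun k => U k i) (fun l => V i l)

/-- The Hermitian part `{M}_H = ½(M + Mᴴ)` of a square complex matrix. -/
noncomputable def hermPart {n : ℕ} (M : Matrix (Fin n) (Fin n) ℂ) :
    Matrix (Fin n) (Fin n) ℂ :=
  (1 / 2 : ℂ) • (M + Mᴴ)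

/-- The modal-contribution matrix
`P̄_{z i} := −{ ∑_j ((u_iᴴ u_j)/(conj(λ_i) + λ_j)) e_i e_jᵀ }_H`. -/
noncomputable def modalContrib {n : ℕ} (U : Matrix (Fin n) (Fin n) ℂ) (lam : Fin n → ℂ)
    (i : Fin n) : Matrix (Fin n) (Fin n) ℂ :=
  -hermPart (∑ j, Matrix.single i j
    ((∑ k, starRingEnd ℂ (U k i) * U k j) / (starRingEnd ℂ (lam i) + lam j)))

/-- The Lyapunov modal interaction matrix
`P_{(ij)} := −½ { R_iᴴ R_j/(conj(λ_i) + λ_j) + R_iᵀ R_j/(λ_i + λ_j) }_H`. -/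
noncomputable def modalInteraction {n : ℕ} (U V : Matrix (Fin n) (Fin n) ℂ)
    (lam : Fin n → ℂ) (i j : Fin n) : Matrix (Fin n) (Fin n) ℂ :=
  -((1 / 2 : ℂ) • hermPart
      ((starRingEnd ℂ (lam i) + lam j)⁻¹ • ((residue U V i)ᴴ * residue U V j) +
        (lam i + lam j)⁻¹ • ((residue U V i)ᵀ * residue U V j)))

/-!
The congruence `X ↦ Vᴴ X V` sends `e_p e_jᵀ` to `conj(v_p) v_jᵀ`, and
`R_iᴴ R_j = (u_iᴴ u_j) conj(v_i) v_jᵀ`, `R_iᵀ R_j = (u_iᵀ u_j) v_i v_jᵀ`. Hence it maps the row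
matrix `∑_j ((u_iᴴ u_j)/(conj(λ_i) + λ_j)) e_i e_jᵀ` behind `P̄_{z i}` to
`∑_j R_iᴴ R_j/(conj(λ_i) + λ_j)`, and, because the conjugation symmetry turns `conj(u_{σ(i)})`,
`conj(λ_{σ(i)})`, `conj(v_{σ(i)})` back into `u_i`, `λ_i`, `v_i`, the one behind `P̄_{z σ(i)}` to
`∑_j R_iᵀ R_j/(λ_i + λ_j)`. The congruence commutes with taking Hermitian parts.
-/

section

variable {R ι κ : Type*} [CommSemiring R] [StarRing R] [Fintype ι] [DecidableEq ι]

theorem conjTranspose_mul_single_mul (V : Matrix ι κ R) (p j : ι) (c : R) :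
    Vᴴ * single p j c * V = c • vecMulVec (star (V p)) (V j) := by
  ext k l
  rw [mul_apply, Finset.sum_eq_single j
    (fun b _ hb => by rw [mul_single_apply_of_ne (hbj := hb), zero_mul]) (by simp),
    mul_single_apply_same]
  simp [vecMulVec_apply, mul_assoc, mul_left_comm]

theorem conjTranspose_mul_sum_single_mul (V : Matrix ι κ R) (p : ι) (c : ι → R) :
    Vᴴ * (∑ j, single p j (c j)) * V = ∑ j, c j • vecMulVec (star (V p)) (V j) := by
  simp only [Matrix.mul_sum, Matrix.sum_mul, conjTranspose_mul_single_mul]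

end

section

variable {n : ℕ}

theorem hermPart_sum {ι : Type*} (s : Finset ι) (M : ι → Matrix (Fin n) (Fin n) ℂ) :
    hermPart (∑ j ∈ s, M j) = ∑ j ∈ s, hermPart (M j) := by
  simp only [hermPart, conjTranspose_sum, ← Finset.smul_sum, Finset.sum_add_distrib]

theorem hermPart_add (M N : Matrix (Fin n) (Fin n) ℂ) :
    hermPart (M + N) = hermPart M + hermPart N := by
  simp only [hermPart, conjTranspose_add]
  module

theorem conjTranspose_mul_hermPart_mul (V M : Matrix (Fin n) (Fin n) ℂ) :
    Vᴴ * hermPart M * V = hermPart (Vᴴ * M * V) := by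
  simp only [hermPart, Matrix.mul_smul, Matrix.smul_mul, Matrix.mul_add, Matrix.add_mul,
    conjTranspose_mul, conjTranspose_conjTranspose, Matrix.mul_assoc]

theorem residue_conjTranspose_mul_residue (U V : Matrix (Fin n) (Fin n) ℂ) (i j : Fin n) :
    (residue U V i)ᴴ * residue U V j =
      (star (Uᵀ i) ⬝ᵥ Uᵀ j) • vecMulVec (star (V i)) (V j) := by
  rw [residue, residue, conjTranspose_vecMulVec, vecMulVec_mul_vecMulVec, vecMulVec_smul]
  rfl

theorem residue_transpose_mul_residue (U V : Matrix (Fin n) (Fin n) ℂ) (i j : Fin n) :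
    (residue U V i)ᵀ * residue U V j = (Uᵀ i ⬝ᵥ Uᵀ j) • vecMulVec (V i) (V j) := by
  rw [residue, residue, transpose_vecMulVec, vecMulVec_mul_vecMulVec, vecMulVec_smul]
  rfl

noncomputable def modalRow (U : Matrix (Fin n) (Fin n) ℂ) (lam : Fin n → ℂ) (i : Fin n) :
    Matrix (Fin n) (Fin n) ℂ :=
  ∑ j, single i j ((∑ k, starRingEnd ℂ (U k i) * U k j) / (starRingEnd ℂ (lam i) + lam j))

theorem modalContrib_eq_neg_hermPart (U : Matrix (Fin n) (Fin n) ℂ) (lam : Fin n → ℂ)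
    (i : Fin n) : modalContrib U lam i = -hermPart (modalRow U lam i) := rfl

theorem conjTranspose_mul_modalRow_mul (U V : Matrix (Fin n) (Fin n) ℂ) (lam : Fin n → ℂ)
    (i : Fin n) :
    Vᴴ * modalRow U lam i * V =
      ∑ j, (starRingEnd ℂ (lam i) + lam j)⁻¹ • ((residue U V i)ᴴ * residue U V j) := by
  rw [modalRow, conjTranspose_mul_sum_single_mul]
  refine Finset.sum_congr rfl fun j _ => ?_
  rw [residue_conjTranspose_mul_residue, smul_smul, div_eq_inv_mul]
  rfl

theorem conjTranspose_mul_modalRow_perm_mul (U V : Matrix (Fin n) (Fin n) ℂ) (lam : Fin n → ℂ)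
    (σ : Equiv.Perm (Fin n))
    (hσlam : ∀ i, lam (σ i) = starRingEnd ℂ (lam i))
    (hσU : ∀ i k, U k (σ i) = starRingEnd ℂ (U k i))
    (hσV : ∀ i k, V (σ i) k = starRingEnd ℂ (V i k)) (i : Fin n) :
    Vᴴ * modalRow U lam (σ i) * V =
      ∑ j, (lam i + lam j)⁻¹ • ((residue U V i)ᵀ * residue U V j) := by
  have hrow : star (V (σ i)) = V i := funext fun k => by simp [hσV]
  rw [modalRow, conjTranspose_mul_sum_single_mul, hrow]
  refine Finset.sum_congr rfl fun j _ => ?_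
  simp only [residue_transpose_mul_residue, smul_smul, div_eq_inv_mul, hσlam, hσU,
    Complex.conj_conj]
  rfl

end

theorem conjugate_pair_modal_contribution_decomposition_general
    (n : ℕ)
    (U V : Matrix (Fin n) (Fin n) ℂ) (lam : Fin n → ℂ)
    (σ : Equiv.Perm (Fin n))
    (hσlam : ∀ i, lam (σ i) = starRingEnd ℂ (lam i))
    (hσU : ∀ i k, U k (σ i) = starRingEnd ℂ (U k i))
    (hσV : ∀ i k, V (σ i) k = starRingEnd ℂ (V i k))
    (i : Fin n) :
    (1 / 2 : ℂ) • (Vᴴ * (modalContrib U lam i + modalContrib U lam (σ i)) * V) =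
      ∑ j, modalInteraction U V lam i j := by
  calc (1 / 2 : ℂ) • (Vᴴ * (modalContrib U lam i + modalContrib U lam (σ i)) * V)
      = -((1 / 2 : ℂ) •
          hermPart (Vᴴ * modalRow U lam i * V + Vᴴ * modalRow U lam (σ i) * V)) := by
        simp only [modalContrib_eq_neg_hermPart, Matrix.mul_add, Matrix.add_mul, Matrix.mul_neg,
          Matrix.neg_mul, conjTranspose_mul_hermPart_mul, hermPart_add]
        module
    _ = ∑ j, modalInteraction U V lam i j := by
        rw [conjTranspose_mul_modalRow_mul,
          conjTranspose_mul_modalRow_perm_mul U V lam σ hσlam hσU hσV, ← Finset.sum_add_distrib,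
          hermPart_sum, Finset.smul_sum, ← Finset.sum_neg_distrib]
        rfl

/-- Modal contributions of a conjugate pair decompose into pairwise interaction matrices:
if `A` is Hurwitz and `σ` is a permutation with `λ_{σ(i)} = conj(λ_i)`,
`u_{σ(i)} = conj(u_i)` and `v_{σ(i)} = conj(v_i)`, then for each `i`,
`½ Vᴴ (P̄_{z i} + P̄_{z σ(i)}) V = ∑_j P_{(ij)}`. -/
theorem conjugate_pair_modal_contribution_decomposition
    (n : ℕ) (hn : 1 ≤ n)
    (A U V : Matrix (Fin n) (Fin n) ℂ) (lam : Fin n → ℂ)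
    (hUV : U * V = 1) (hVU : V * U = 1)
    (hA : A = U * Matrix.diagonal lam * V)
    (hHur : ∀ i, (lam i).re < 0)
    (σ : Equiv.Perm (Fin n))
    (hσlam : ∀ i, lam (σ i) = starRingEnd ℂ (lam i))
    (hσU : ∀ i k, U k (σ i) = starRingEnd ℂ (U k i))
    (hσV : ∀ i k, V (σ i) k = starRingEnd ℂ (V i k))
    (i : Fin n) :
    (1 / 2 : ℂ) • (Vᴴ * (modalContrib U lam i + modalContrib U lam (σ i)) * V) =
      ∑ j, modalInteraction U V lam i j :=
  conjugate_pair_modal_contribution_decomposition_general n U V lam σ hσlam hσU hσV i
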